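/- arXiv:2309.00782 — 7 statements merged into one kernel-verified Lean document; each statement's English description precedes it below -/
import Mathlib

section
/- Let (x₁,y₁), (x₂,y₂), (x₃,y₃) ∈ ℝ² and Δ > 0 with x₁ < x₂. Let D := √((x₂−x₁)² + (y₂−y₁)²) and assume D > 2Δ. Set θ := arctan((y₂−y₁)/(x₂−x₁)) and α := arcsin(2Δ/D), and assume θ + α < π/2 and θ − α > −π/2. Suppose that either (Upper) y₃ > tan θ·(x₃−x₁) + y₁ + 2Δ/cos θ, and y₃ > tan(θ+α)·(x₃−x₁) + y₁, and y₃ > tan(θ−α)·(x₃−x₂) + y₂; or (Lower) y₃ < tan θ·(x₃−x₁) + y₁ − 2Δ/cos θ, and y₃ < tan(θ+α)·(x₃−x₂) + y₂, and y₃ < tan(θ−α)·(x₃−x₁) + y₁. Then there exist no point a ∈ ℝ² and no direction v ∈ ℝ², v ≠ 0, such that for each i ∈ {1,2,3} there is sᵢ ∈ ℝ with ‖a + sᵢ·v − (xᵢ,yᵢ)‖ ≤ Δ; i.e., no line of the plane is within distance Δ of all three points simultaneously. -/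
open Real

/-!
If a line with direction angle `φ` passes within `Δ` of two points, the component of their
difference perpendicular to `φ` is at most `2Δ` in absolute value. Writing `ℓᵢ = (xᵢ, yᵢ)`,
for the pair `ℓ₁, ℓ₂` this forces `φ`, taken modulo `π`, into `[θ - α, θ + α]`. For a fixed
vector the perpendicular component is a sinusoid in `φ`, and a sinusoid exceeding `c ≥ 0` at both
ends of an interval shorter than `π` exceeds `c` on the whole interval. In the upper case the
perpendicular component of `ℓ₃ - ℓ₁` exceeds `2Δ` at `θ - α` and at `θ`, and that of `ℓ₃ - ℓ₂`
at `θ` and at `θ + α`; so for every admissible `φ` one of the pairs `(ℓ₁, ℓ₃)`, `(ℓ₂, ℓ₃)` is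
missed. The lower case is the same argument for `ℓ₂ - ℓ₃` and `ℓ₁ - ℓ₃`.
-/

/-- The signed distance of `(x, y)` from the line through the origin with direction angle `φ`. -/
noncomputable def perpComponent (φ x y : ℝ) : ℝ := cos φ * y - sin φ * x

lemma perpComponent_polar (φ θ D : ℝ) :
    perpComponent φ (D * cos θ) (D * sin θ) = D * sin (θ - φ) := by
  unfold perpComponent; rw [sin_sub]; ring

lemma perpComponent_add_angle (θ ψ x y : ℝ) :
    perpComponent (θ + ψ) x y = cos ψ * perpComponent θ x y - sin ψ * (cos θ * x + sin θ * y) := by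
  unfold perpComponent; rw [cos_add, sin_add]; ring

lemma sin_sub_mul_perpComponent (φ₀ φ φ₁ x y : ℝ) :
    sin (φ₁ - φ₀) * perpComponent φ x y =
      sin (φ₁ - φ) * perpComponent φ₀ x y + sin (φ - φ₀) * perpComponent φ₁ x y := by
  unfold perpComponent; simp only [sin_sub]; ring

lemma sin_add_le_sin_add_sin {a b : ℝ} (ha : 0 ≤ sin a) (hb : 0 ≤ sin b) :
    sin (a + b) ≤ sin a + sin b := by
  rw [sin_add]
  linarith [mul_le_of_le_one_right ha (cos_le_one b), mul_le_of_le_one_left hb (cos_le_one a)]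

lemma lt_perpComponent_of_mem_Icc {c φ₀ φ φ₁ x y : ℝ} (hc : 0 ≤ c) (h₀ : φ₀ ≤ φ) (h₁ : φ ≤ φ₁)
    (hπ : φ₁ - φ₀ < π) (hc₀ : c < perpComponent φ₀ x y) (hc₁ : c < perpComponent φ₁ x y) :
    c < perpComponent φ x y := by
  rcases h₀.eq_or_lt with rfl | h₀
  · exact hc₀
  have ha : 0 < sin (φ - φ₀) := sin_pos_of_pos_of_lt_pi (by linarith) (by linarith)
  have hb : 0 ≤ sin (φ₁ - φ) := sin_nonneg_of_nonneg_of_le_pi (by linarith) (by linarith)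
  have hsum : sin (φ₁ - φ₀) ≤ sin (φ₁ - φ) + sin (φ - φ₀) := by
    simpa using sin_add_le_sin_add_sin hb ha.le
  refine lt_of_mul_lt_mul_left ?_ (sin_pos_of_pos_of_lt_pi (by linarith) hπ).le
  rw [sin_sub_mul_perpComponent φ₀ φ φ₁]
  calc sin (φ₁ - φ₀) * c ≤ (sin (φ₁ - φ) + sin (φ - φ₀)) * c := mul_le_mul_of_nonneg_right hsum hc
    _ < _ := by nlinarith [mul_le_mul_of_nonneg_left hc₀.le hb, mul_lt_mul_of_pos_left hc₁ ha]

lemma two_mul_lt_perpComponent {Δ D θ α φ x y x' y' : ℝ} (hΔ : 0 ≤ Δ) (hαπ : α < π)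
    (hsin : D * sin α = 2 * Δ) (hx : x - x' = D * cos θ) (hy : y - y' = D * sin θ)
    (hφ : |φ - θ| ≤ α) (hA : 2 * Δ < perpComponent θ x y)
    (hB : 0 < perpComponent (θ + α) x y) (hC : 0 < perpComponent (θ - α) x' y') :
    2 * Δ < perpComponent φ x y ∨ 2 * Δ < perpComponent φ x' y' := by
  have hshift (ψ : ℝ) : perpComponent ψ x' y' = perpComponent ψ x y - D * sin (θ - ψ) := by
    rw [← perpComponent_polar, ← hx, ← hy]; unfold perpComponent; ring
  obtain ⟨hφ₁, hφ₂⟩ := abs_le.1 hφ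
  rcases le_total φ θ with h | h
  · left
    refine lt_perpComponent_of_mem_Icc (φ₀ := θ - α) (φ₁ := θ) (by linarith) (by linarith) h
      (by linarith) ?_ hA
    have := hshift (θ - α)
    rw [sub_sub_cancel] at this
    linarith
  · right
    refine lt_perpComponent_of_mem_Icc (φ₀ := θ) (φ₁ := θ + α) (by linarith) h (by linarith)
      (by linarith) ?_ ?_
    · rw [hshift, sub_self, sin_zero]; linarith
    · rw [hshift, sub_add_cancel_left, sin_neg]; linarith

lemma lt_perpComponent_iff {φ c x y : ℝ} (hφ : 0 < cos φ) :
    tan φ * x + c / cos φ < y ↔ c < perpComponent φ x y := by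
  rw [tan_eq_sin_div_cos, div_mul_eq_mul_div, ← add_div, div_lt_iff₀ hφ, perpComponent]
  constructor <;> intro h <;> linarith

lemma pos_perpComponent_iff {φ x y : ℝ} (hφ : 0 < cos φ) :
    tan φ * x < y ↔ 0 < perpComponent φ x y := by
  simpa using lt_perpComponent_iff (c := 0) hφ

lemma two_mul_lt_perpComponent_of_tan {Δ D θ α φ x y x' y' : ℝ} (hΔ : 0 ≤ Δ)
    (hsin : D * sin α = 2 * Δ) (hx : x - x' = D * cos θ) (hy : y - y' = D * sin θ)
    (hφ : |φ - θ| ≤ α) (hθα : θ + α < π / 2) (hθα' : -(π / 2) < θ - α)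
    (hA : tan θ * x + 2 * Δ / cos θ < y) (hB : tan (θ + α) * x < y) (hC : tan (θ - α) * x' < y') :
    2 * Δ < perpComponent φ x y ∨ 2 * Δ < perpComponent φ x' y' := by
  have hα : 0 ≤ α := (abs_nonneg _).trans hφ
  have hcos (ψ : ℝ) (h₁ : θ - α ≤ ψ) (h₂ : ψ ≤ θ + α) : 0 < cos ψ :=
    cos_pos_of_mem_Ioo ⟨by linarith, by linarith⟩
  exact two_mul_lt_perpComponent hΔ (by linarith [pi_pos]) hsin hx hy hφ
    ((lt_perpComponent_iff (hcos θ (by linarith) (by linarith))).1 hA)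
    ((pos_perpComponent_iff (hcos (θ + α) (by linarith) le_rfl)).1 hB)
    ((pos_perpComponent_iff (hcos (θ - α) le_rfl (by linarith))).1 hC)

lemma abs_perpComponent_le_norm (φ : ℝ) (w : EuclideanSpace ℝ (Fin 2)) :
    |perpComponent φ (w 0) (w 1)| ≤ ‖w‖ := by
  rw [EuclideanSpace.norm_eq, Fin.sum_univ_two]
  apply Real.abs_le_sqrt
  simp only [Real.norm_eq_abs, sq_abs]
  unfold perpComponent
  nlinarith [sin_sq_add_cos_sq φ, sq_nonneg (cos φ * w 0 + sin φ * w 1)]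

lemma abs_perpComponent_sub_le {a v p q : EuclideanSpace ℝ (Fin 2)} {s t Δ φ : ℝ}
    (hv : perpComponent φ (v 0) (v 1) = 0) (hp : ‖a + s • v - p‖ ≤ Δ) (hq : ‖a + t • v - q‖ ≤ Δ) :
    |perpComponent φ (q 0 - p 0) (q 1 - p 1)| ≤ 2 * Δ := by
  have key : perpComponent φ (q 0 - p 0) (q 1 - p 1) =
      perpComponent φ ((a + s • v - p) 0) ((a + s • v - p) 1) -
        perpComponent φ ((a + t • v - q) 0) ((a + t • v - q) 1) := by
    simp only [PiLp.add_apply, PiLp.sub_apply, PiLp.smul_apply, smul_eq_mul]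
    unfold perpComponent at hv ⊢
    linear_combination (t - s) * hv
  rw [key, two_mul]
  exact (abs_sub _ _).trans (add_le_add ((abs_perpComponent_le_norm φ _).trans hp)
    ((abs_perpComponent_le_norm φ _).trans hq))

lemma exists_perpComponent_eq_zero (θ x y : ℝ) :
    ∃ φ, |φ - θ| ≤ π / 2 ∧ perpComponent φ x y = 0 := by
  rcases eq_or_ne (cos θ * x + sin θ * y) 0 with hX | hX
  · refine ⟨θ + π / 2, by rw [add_sub_cancel_left, abs_of_pos pi_div_two_pos], ?_⟩
    rw [perpComponent_add_angle, cos_pi_div_two, sin_pi_div_two, hX]; ring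
  · refine ⟨θ + arctan (perpComponent θ x y / (cos θ * x + sin θ * y)), ?_, ?_⟩
    · rw [add_sub_cancel_left]
      exact abs_le.2 ⟨(neg_pi_div_two_lt_arctan _).le, (arctan_lt_pi_div_two _).le⟩
    · rw [perpComponent_add_angle, cos_arctan, sin_arctan]
      field_simp
      ring

lemma abs_le_arcsin_of_abs_sin_le {x s : ℝ} (hx : |x| ≤ π / 2) (h : |sin x| ≤ s) :
    |x| ≤ arcsin s := by
  obtain ⟨hx₁, hx₂⟩ := abs_le.1 hx
  have h₁ : x ≤ arcsin s := calc
    x = arcsin (sin x) := (arcsin_sin hx₁ hx₂).symm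
    _ ≤ arcsin s := arcsin_le_arcsin ((le_abs_self _).trans h)
  have h₂ : -x ≤ arcsin s := calc
    -x = arcsin (sin (-x)) := (arcsin_sin (by linarith) (by linarith)).symm
    _ ≤ arcsin s := arcsin_le_arcsin (by rw [sin_neg]; exact (neg_le_abs _).trans h)
  exact abs_le.2 ⟨by linarith, h₁⟩

lemma abs_sub_le_arcsin_of_abs_perpComponent_le {D Δ θ φ : ℝ} (hD : 0 < D)
    (hφθ : |φ - θ| ≤ π / 2) (h : |perpComponent φ (D * cos θ) (D * sin θ)| ≤ 2 * Δ) :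
    |φ - θ| ≤ arcsin (2 * Δ / D) := by
  refine abs_le_arcsin_of_abs_sin_le hφθ ?_
  rw [perpComponent_polar, abs_mul, abs_of_pos hD, ← neg_sub, sin_neg, abs_neg] at h
  rwa [le_div_iff₀ hD, mul_comm]

lemma sqrt_mul_cos_sin_arctan_div {x : ℝ} (y : ℝ) (hx : 0 < x) :
    √(x ^ 2 + y ^ 2) * cos (arctan (y / x)) = x ∧ √(x ^ 2 + y ^ 2) * sin (arctan (y / x)) = y := by
  have hr : √(x ^ 2 + y ^ 2) = x * √(1 + (y / x) ^ 2) := by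
    rw [show x ^ 2 + y ^ 2 = x ^ 2 * (1 + (y / x) ^ 2) by field_simp, sqrt_mul (sq_nonneg x),
      sqrt_sq hx.le]
  have hpos : 0 < √(1 + (y / x) ^ 2) := by positivity
  rw [hr, cos_arctan, sin_arctan]
  constructor <;> field_simp

/-- **Infeasible triples (Proposition 3).** If a third point `(x₃, y₃)` lies strictly above the
upper envelope or strictly below the lower envelope of the region `P̃_{ℓ₁,ℓ₂}(Δ)` determined by
the lines `λ₁,…,λ₆`, then no line of the plane is within distance `Δ` of all three points
`(x₁,y₁)`, `(x₂,y₂)`, `(x₃,y₃)` simultaneously. -/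
theorem infeasible_triple (x₁ y₁ x₂ y₂ x₃ y₃ Δ : ℝ) (hΔ : 0 < Δ) (hx : x₁ < x₂)
    (D : ℝ) (hD : D = Real.sqrt ((x₂ - x₁) ^ 2 + (y₂ - y₁) ^ 2)) (hD2 : D > 2 * Δ)
    (θ α : ℝ) (hθ : θ = Real.arctan ((y₂ - y₁) / (x₂ - x₁)))
    (hα : α = Real.arcsin (2 * Δ / D))
    (hangle₁ : θ + α < π / 2) (hangle₂ : θ - α > -(π / 2))
    (hcase :
      (y₃ > Real.tan θ * (x₃ - x₁) + y₁ + 2 * Δ / Real.cos θ ∧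
        y₃ > Real.tan (θ + α) * (x₃ - x₁) + y₁ ∧
        y₃ > Real.tan (θ - α) * (x₃ - x₂) + y₂) ∨
      (y₃ < Real.tan θ * (x₃ - x₁) + y₁ - 2 * Δ / Real.cos θ ∧
        y₃ < Real.tan (θ + α) * (x₃ - x₂) + y₂ ∧
        y₃ < Real.tan (θ - α) * (x₃ - x₁) + y₁)) :
    ¬ ∃ (a v : EuclideanSpace ℝ (Fin 2)), v ≠ 0 ∧
        (∃ s₁ : ℝ, ‖a + s₁ • v - ((EuclideanSpace.equiv (Fin 2) ℝ).symm ![x₁, y₁])‖ ≤ Δ) ∧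
        (∃ s₂ : ℝ, ‖a + s₂ • v - ((EuclideanSpace.equiv (Fin 2) ℝ).symm ![x₂, y₂])‖ ≤ Δ) ∧
        (∃ s₃ : ℝ, ‖a + s₃ • v - ((EuclideanSpace.equiv (Fin 2) ℝ).symm ![x₃, y₃])‖ ≤ Δ) := by
  rintro ⟨a, v, -, ⟨s₁, h₁⟩, ⟨s₂, h₂⟩, ⟨s₃, h₃⟩⟩
  obtain ⟨hdx, hdy⟩ : x₂ - x₁ = D * cos θ ∧ y₂ - y₁ = D * sin θ := by
    rw [hD, hθ]; exact (sqrt_mul_cos_sin_arctan_div _ (sub_pos.2 hx)).imp Eq.symm Eq.symm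
  have hD0 : 0 < D := by linarith
  have hsin : D * sin α = 2 * Δ := by
    rw [hα, sin_arcsin (by linarith [div_pos (by linarith : 0 < 2 * Δ) hD0])
      ((div_le_one hD0).2 hD2.le), mul_div_cancel₀ _ hD0.ne']
  have htan : tan θ * (x₂ - x₁) = y₂ - y₁ := by
    rw [hθ, tan_arctan, div_mul_cancel₀ _ (sub_pos.2 hx).ne']
  obtain ⟨φ, hφθ, hφ⟩ := exists_perpComponent_eq_zero θ (v 0) (v 1)
  have cover {x y x' y' s s' : ℝ}
      (h : ‖a + s • v - (EuclideanSpace.equiv (Fin 2) ℝ).symm ![x, y]‖ ≤ Δ)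
      (h' : ‖a + s' • v - (EuclideanSpace.equiv (Fin 2) ℝ).symm ![x', y']‖ ≤ Δ) :
      |perpComponent φ (x' - x) (y' - y)| ≤ 2 * Δ := by
    simpa using abs_perpComponent_sub_le hφ h h'
  have hφα : |φ - θ| ≤ α :=
    hα ▸ abs_sub_le_arcsin_of_abs_perpComponent_le hD0 hφθ (hdx ▸ hdy ▸ cover h₁ h₂)
  rcases hcase with ⟨hA, hB, hC⟩ | ⟨hA, hB, hC⟩
  · rcases two_mul_lt_perpComponent_of_tan (x := x₃ - x₁) (y := y₃ - y₁) (x' := x₃ - x₂)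
      (y' := y₃ - y₂) hΔ.le hsin (by linarith) (by linarith) hφα hangle₁ hangle₂
      (by linarith) (by linarith) (by linarith) with h | h
    · linarith [(abs_le.1 (cover h₁ h₃)).2]
    · linarith [(abs_le.1 (cover h₂ h₃)).2]
  · rcases two_mul_lt_perpComponent_of_tan (x := x₂ - x₃) (y := y₂ - y₃) (x' := x₁ - x₃)
      (y' := y₁ - y₃) hΔ.le hsin (by linarith) (by linarith) hφα hangle₁ hangle₂
      (by linarith) (by linarith) (by linarith) with h | h
    · linarith [(abs_le.1 (cover h₃ h₂)).2]
    · linarith [(abs_le.1 (cover h₃ h₁)).2]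
end

section
/- Let x₁, y₁, x₂, y₂, m, q ∈ ℝ and Δ ≥ 0 with x₁ < x₂, and set D := √((x₂−x₁)² + (y₂−y₁)²). If |y₁ − m·x₁ − q| ≤ Δ·√(1+m²) and |y₂ − m·x₂ − q| ≤ Δ·√(1+m²), then |sin(arctan((y₂−y₁)/(x₂−x₁)) − arctan m)| · D ≤ 2Δ. In particular, if moreover D > 2Δ, the angle β = arctan m of any line of slope m within distance Δ of both points satisfies |sin(θ − β)| ≤ sin α, where θ = arctan((y₂−y₁)/(x₂−x₁)) and α = arcsin(2Δ/D). -/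
/-!
Writing `s = (y₂ - y₁)/(x₂ - x₁)`, the identity `sin (arctan s - arctan m) = (s - m)/(√(1+s²) √(1+m²))`
and `D = (x₂ - x₁) √(1+s²)` turn `|sin (θ - arctan m)| · D` into `|(y₂ - y₁) - m (x₂ - x₁)| / √(1+m²)`,
the difference of the signed distances of the two points to the line. Each distance is at most `Δ`,
so the difference is at most `2Δ`.
-/

open Real

theorem Real.sin_arctan_sub_arctan (s m : ℝ) :
    sin (arctan s - arctan m) = (s - m) / (√(1 + s ^ 2) * √(1 + m ^ 2)) := by
  rw [sin_sub, sin_arctan, cos_arctan, sin_arctan, cos_arctan]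
  field_simp

theorem Real.min_le_sin_arcsin (t : ℝ) : min t 1 ≤ sin (arcsin t) := by
  rcases le_total t 1 with ht | ht
  · rcases le_total (-1) t with ht' | ht'
    · rw [sin_arcsin ht' ht, min_eq_left ht]
    · rw [arcsin_of_le_neg_one ht', sin_neg, sin_pi_div_two]
      exact (min_le_left _ _).trans ht'
  · rw [arcsin_of_one_le ht, sin_pi_div_two]
    exact min_le_right _ _

theorem sqrt_sq_add_sq_eq_mul_sqrt_one_add_sq_div {dx : ℝ} (hdx : 0 < dx) (dy : ℝ) :
    √(dx ^ 2 + dy ^ 2) = dx * √(1 + (dy / dx) ^ 2) := by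
  rw [← sqrt_sq hdx.le, ← sqrt_mul (sq_nonneg dx), sqrt_sq hdx.le]
  congr 1
  field_simp

theorem abs_sin_arctan_div_sub_arctan_mul_sqrt {dx : ℝ} (hdx : 0 < dx) (dy m : ℝ) :
    |sin (arctan (dy / dx) - arctan m)| * √(dx ^ 2 + dy ^ 2) = |dy - m * dx| / √(1 + m ^ 2) := by
  have hs : 0 < √(1 + (dy / dx) ^ 2) := sqrt_pos.mpr (by positivity)
  have hm : 0 < √(1 + m ^ 2) := sqrt_pos.mpr (by positivity)
  have hdy : dy - m * dx = (dy / dx - m) * dx := by field_simp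
  rw [sin_arctan_sub_arctan, sqrt_sq_add_sq_eq_mul_sqrt_one_add_sq_div hdx, hdy, abs_mul,
    abs_of_pos hdx, abs_div, abs_of_pos (mul_pos hs hm)]
  field_simp

theorem angular_window_general (x₁ y₁ x₂ y₂ m q Δ : ℝ) (hx : x₁ < x₂)
    (D : ℝ) (hD : D = Real.sqrt ((x₂ - x₁) ^ 2 + (y₂ - y₁) ^ 2))
    (h₁ : |y₁ - m * x₁ - q| ≤ Δ * Real.sqrt (1 + m ^ 2))
    (h₂ : |y₂ - m * x₂ - q| ≤ Δ * Real.sqrt (1 + m ^ 2)) :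
    |Real.sin (Real.arctan ((y₂ - y₁) / (x₂ - x₁)) - Real.arctan m)| * D ≤ 2 * Δ ∧
      (D > 2 * Δ →
        |Real.sin (Real.arctan ((y₂ - y₁) / (x₂ - x₁)) - Real.arctan m)| ≤
          Real.sin (Real.arcsin (2 * Δ / D))) := by
  have hdx : 0 < x₂ - x₁ := sub_pos.mpr hx
  have hm : 0 < √(1 + m ^ 2) := sqrt_pos.mpr (by positivity)
  have hdiff : |(y₂ - y₁) - m * (x₂ - x₁)| ≤ 2 * Δ * √(1 + m ^ 2) := by
    calc |(y₂ - y₁) - m * (x₂ - x₁)| = |(y₂ - m * x₂ - q) - (y₁ - m * x₁ - q)| := by ring_nf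
      _ ≤ |y₂ - m * x₂ - q| + |y₁ - m * x₁ - q| := abs_sub _ _
      _ ≤ 2 * Δ * √(1 + m ^ 2) := by linarith
  have hwindow : |sin (arctan ((y₂ - y₁) / (x₂ - x₁)) - arctan m)| * D ≤ 2 * Δ := by
    rw [hD, abs_sin_arctan_div_sub_arctan_mul_sqrt hdx, div_le_iff₀ hm]
    exact hdiff
  refine ⟨hwindow, fun _ => ?_⟩
  have hDpos : 0 < D := hD ▸ sqrt_pos.mpr (by positivity)
  refine le_trans ?_ (min_le_sin_arcsin _)
  exact le_min ((le_div_iff₀ hDpos).mpr hwindow) (abs_sin_le_one _)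

/-- **Angular window (Proposition 3, proof).** If a line of slope `m` and intercept `q` is
within distance `Δ` of both `(x₁, y₁)` and `(x₂, y₂)` with `x₁ < x₂`, then, writing
`D = √((x₂-x₁)² + (y₂-y₁)²)` and `θ = arctan((y₂-y₁)/(x₂-x₁))`, one has
`|sin(θ - arctan m)| · D ≤ 2Δ`; in particular, if `D > 2Δ`, then
`|sin(θ - arctan m)| ≤ sin(arcsin(2Δ/D))`. -/
theorem angular_window (x₁ y₁ x₂ y₂ m q Δ : ℝ) (hΔ : 0 ≤ Δ) (hx : x₁ < x₂)
    (D : ℝ) (hD : D = Real.sqrt ((x₂ - x₁) ^ 2 + (y₂ - y₁) ^ 2))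
    (h₁ : |y₁ - m * x₁ - q| ≤ Δ * Real.sqrt (1 + m ^ 2))
    (h₂ : |y₂ - m * x₂ - q| ≤ Δ * Real.sqrt (1 + m ^ 2)) :
    |Real.sin (Real.arctan ((y₂ - y₁) / (x₂ - x₁)) - Real.arctan m)| * D ≤ 2 * Δ ∧
      (D > 2 * Δ →
        |Real.sin (Real.arctan ((y₂ - y₁) / (x₂ - x₁)) - Real.arctan m)| ≤
          Real.sin (Real.arcsin (2 * Δ / D))) :=
  angular_window_general x₁ y₁ x₂ y₂ m q Δ hx D hD h₁ h₂
end

section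
/- Let a ∈ (−π/2, π/2) and let z₁, z₂ ∈ (−π/2, π/2) with z₁ < z₂, z₁ ≠ a and z₂ ≠ a. Then (√(1 + tan² z₁) − √(1 + tan² a))/(tan z₁ − tan a) < (√(1 + tan² z₂) − √(1 + tan² a))/(tan z₂ − tan a); i.e., the function f(z) = (√(1+tan²z) − √(1+tan²a))/(tan z − tan a) is strictly increasing on (−π/2, π/2) \ {a}. -/
open Real

/-! With `t = tan z`, which is strictly increasing on `(-π/2, π/2)`, the quotient is the slope of
the chord of `t ↦ √(1 + t²)` from `tan a` to `t`. That function is strictly convex because its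
derivative `t / √(1 + t²) = sin (arctan t)` is strictly increasing, and chord slopes from a fixed
point of a strictly convex function are strictly increasing. -/

lemma hasDerivAt_sqrt_one_add_sq (x : ℝ) :
    HasDerivAt (fun x : ℝ => √(1 + x ^ 2)) (x / √(1 + x ^ 2)) x := by
  have hpos : (0 : ℝ) < 1 + x ^ 2 := by positivity
  convert (((hasDerivAt_pow 2 x).const_add 1).sqrt hpos.ne') using 1
  field_simp
  ring

lemma strictMono_div_sqrt_one_add_sq : StrictMono fun x : ℝ => x / √(1 + x ^ 2) := by
  simp_rw [← sin_arctan]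
  have arctan_mem (x : ℝ) : arctan x ∈ Set.Icc (-(π / 2)) (π / 2) :=
    ⟨(neg_pi_div_two_lt_arctan x).le, (arctan_lt_pi_div_two x).le⟩
  exact fun x y hxy => strictMonoOn_sin (arctan_mem x) (arctan_mem y) (arctan_strictMono hxy)

lemma strictConvexOn_sqrt_one_add_sq : StrictConvexOn ℝ Set.univ fun x : ℝ => √(1 + x ^ 2) := by
  refine StrictMono.strictConvexOn_univ_of_deriv (by fun_prop) ?_
  rw [funext fun x => (hasDerivAt_sqrt_one_add_sq x).deriv]
  exact strictMono_div_sqrt_one_add_sq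

/-- **Lemma 2 (Appendix C).** The function `f(z) = (√(1+tan²z) - √(1+tan²a)) / (tan z - tan a)`
is strictly increasing on `(-π/2, π/2) \ {a}`. -/
theorem chord_slope_strict_mono (a z₁ z₂ : ℝ)
    (ha : a ∈ Set.Ioo (-(π / 2)) (π / 2))
    (hz₁ : z₁ ∈ Set.Ioo (-(π / 2)) (π / 2)) (hz₂ : z₂ ∈ Set.Ioo (-(π / 2)) (π / 2))
    (hlt : z₁ < z₂) (hne₁ : z₁ ≠ a) (hne₂ : z₂ ≠ a) :
    (Real.sqrt (1 + Real.tan z₁ ^ 2) - Real.sqrt (1 + Real.tan a ^ 2)) /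
        (Real.tan z₁ - Real.tan a) <
      (Real.sqrt (1 + Real.tan z₂ ^ 2) - Real.sqrt (1 + Real.tan a ^ 2)) /
        (Real.tan z₂ - Real.tan a) :=
  strictConvexOn_sqrt_one_add_sq.secant_strict_mono trivial trivial trivial
    (fun h => hne₁ (injOn_tan hz₁ ha h)) (fun h => hne₂ (injOn_tan hz₂ ha h))
    (strictMonoOn_tan hz₁ hz₂ hlt)
end

section
/- Let x₁, y₁, x₂, y₂ ∈ ℝ with x₁ < x₂ and Δ > 0, set D := √((x₂−x₁)² + (y₂−y₁)²) and assume D > 2Δ. Let θ := arctan((y₂−y₁)/(x₂−x₁)) and α := arcsin(2Δ/D). (i) If θ + α < π/2, then for m := tan(θ+α) and q := (y₁ + y₂ − m·(x₁ + x₂))/2 one has |y₁ − m·x₁ − q| = Δ·√(1+m²) and |y₂ − m·x₂ − q| = Δ·√(1+m²). (ii) If θ − α > −π/2, then the same two equalities hold for m := tan(θ−α) and q := (y₁ + y₂ − m·(x₁ + x₂))/2. In other words, each of the two lines through the midpoint of the two points with slope tan(θ±α) is at distance exactly Δ from both (x₁,y₁) and (x₂,y₂). -/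
open Real

/-! Write `(x₂ - x₁, y₂ - y₁) = D (cos θ, sin θ)`. Both points lie at signed vertical offset
`±(D / 2) sin (β - θ) / cos β` from the line of slope `tan β` through their midpoint, and
`1 / cos β = √(1 + tan² β)` when `cos β > 0`. For `β = θ ± α` we get `|sin (β - θ)| = sin α = 2Δ / D`,
so both distances equal `Δ`. -/

lemma sqrt_sq_add_sq_mul_cos_arctan_div {a : ℝ} (b : ℝ) (ha : 0 < a) :
    √(a ^ 2 + b ^ 2) * cos (arctan (b / a)) = a := by
  rw [cos_arctan, show a ^ 2 + b ^ 2 = a ^ 2 * (1 + (b / a) ^ 2) by field_simp,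
    sqrt_mul (sq_nonneg a), sqrt_sq ha.le]
  field_simp

lemma sqrt_sq_add_sq_mul_sin_arctan_div {a : ℝ} (b : ℝ) (ha : 0 < a) :
    √(a ^ 2 + b ^ 2) * sin (arctan (b / a)) = b := by
  rw [sin_arctan, show a ^ 2 + b ^ 2 = a ^ 2 * (1 + (b / a) ^ 2) by field_simp,
    sqrt_mul (sq_nonneg a), sqrt_sq ha.le]
  field_simp

lemma sin_mul_sub_cos_mul_eq_sqrt_mul_sin_sub_arctan {a : ℝ} (b β : ℝ) (ha : 0 < a) :
    sin β * a - cos β * b = √(a ^ 2 + b ^ 2) * sin (β - arctan (b / a)) := by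
  rw [sin_sub]
  linear_combination cos β * sqrt_sq_add_sq_mul_sin_arctan_div b ha -
    sin β * sqrt_sq_add_sq_mul_cos_arctan_div b ha

lemma abs_tan_mul_sub {β : ℝ} (hβ : 0 < cos β) (a b : ℝ) :
    |tan β * a - b| = |sin β * a - cos β * b| * √(1 + tan β ^ 2) := by
  have hsec : √(1 + tan β ^ 2) = (cos β)⁻¹ := by rw [← inv_sqrt_one_add_tan_sq hβ, inv_inv]
  rw [hsec, ← abs_of_pos (inv_pos.2 hβ), ← abs_mul, tan_eq_sin_div_cos]
  congr 1
  field_simp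

lemma abs_sub_midpoint_line {x₁ y₁ x₂ y₂ Δ β : ℝ} (hx : x₁ < x₂) (hβ : 0 < cos β)
    (hdist : √((x₂ - x₁) ^ 2 + (y₂ - y₁) ^ 2) *
      |sin (β - arctan ((y₂ - y₁) / (x₂ - x₁)))| = 2 * Δ) :
    |y₁ - tan β * x₁ - (y₁ + y₂ - tan β * (x₁ + x₂)) / 2| = Δ * √(1 + tan β ^ 2) ∧
      |y₂ - tan β * x₂ - (y₁ + y₂ - tan β * (x₁ + x₂)) / 2| = Δ * √(1 + tan β ^ 2) := by
  have hres : |tan β * (x₂ - x₁) - (y₂ - y₁)| = 2 * Δ * √(1 + tan β ^ 2) := by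
    rw [abs_tan_mul_sub hβ, sin_mul_sub_cos_mul_eq_sqrt_mul_sin_sub_arctan _ _ (sub_pos.2 hx),
      abs_mul, abs_of_nonneg (sqrt_nonneg _), hdist]
  constructor
  · rw [show y₁ - tan β * x₁ - (y₁ + y₂ - tan β * (x₁ + x₂)) / 2
        = (tan β * (x₂ - x₁) - (y₂ - y₁)) / 2 by ring, abs_div, hres]
    ring
  · rw [show y₂ - tan β * x₂ - (y₁ + y₂ - tan β * (x₁ + x₂)) / 2
        = -(tan β * (x₂ - x₁) - (y₂ - y₁)) / 2 by ring, abs_div, abs_neg, hres]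
    ring

/-- **Internal tangents (Lemma 1, Case 2, Appendix C).** For two points `(x₁,y₁)`, `(x₂,y₂)` at
distance `D > 2Δ` with `x₁ < x₂`, each of the two lines through their midpoint with slope
`tan(θ ± α)` (where `θ = arctan((y₂-y₁)/(x₂-x₁))`, `α = arcsin(2Δ/D)`) is at distance exactly
`Δ` from both points. -/
theorem internal_tangent_lines (x₁ y₁ x₂ y₂ Δ : ℝ) (hΔ : 0 < Δ) (hx : x₁ < x₂)
    (D : ℝ) (hD : D = Real.sqrt ((x₂ - x₁) ^ 2 + (y₂ - y₁) ^ 2)) (hD2 : D > 2 * Δ)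
    (θ α : ℝ) (hθ : θ = Real.arctan ((y₂ - y₁) / (x₂ - x₁)))
    (hα : α = Real.arcsin (2 * Δ / D)) :
    (θ + α < π / 2 →
      |y₁ - Real.tan (θ + α) * x₁ -
          (y₁ + y₂ - Real.tan (θ + α) * (x₁ + x₂)) / 2| =
        Δ * Real.sqrt (1 + Real.tan (θ + α) ^ 2) ∧
      |y₂ - Real.tan (θ + α) * x₂ -
          (y₁ + y₂ - Real.tan (θ + α) * (x₁ + x₂)) / 2| =
        Δ * Real.sqrt (1 + Real.tan (θ + α) ^ 2)) ∧
    (θ - α > -(π / 2) →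
      |y₁ - Real.tan (θ - α) * x₁ -
          (y₁ + y₂ - Real.tan (θ - α) * (x₁ + x₂)) / 2| =
        Δ * Real.sqrt (1 + Real.tan (θ - α) ^ 2) ∧
      |y₂ - Real.tan (θ - α) * x₂ -
          (y₁ + y₂ - Real.tan (θ - α) * (x₁ + x₂)) / 2| =
        Δ * Real.sqrt (1 + Real.tan (θ - α) ^ 2)) := by
  have hDpos : 0 < D := by linarith
  have hratio : 0 < 2 * Δ / D := by positivity
  have hdist : D * |sin α| = 2 * Δ := by
    rw [hα, sin_arcsin (by linarith) ((div_le_one hDpos).2 hD2.le), abs_of_pos hratio]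
    field_simp
  have hα0 : 0 ≤ α := hα ▸ arcsin_nonneg.2 hratio.le
  have hθ_mem : θ ∈ Set.Ioo (-(π / 2)) (π / 2) :=
    hθ ▸ ⟨neg_pi_div_two_lt_arctan _, arctan_lt_pi_div_two _⟩
  subst hD hθ
  constructor
  · intro hlt
    refine abs_sub_midpoint_line hx (cos_pos_of_mem_Ioo ⟨by linarith [hθ_mem.1], hlt⟩) ?_
    rwa [add_sub_cancel_left]
  · intro hgt
    refine abs_sub_midpoint_line hx (cos_pos_of_mem_Ioo ⟨hgt, by linarith [hθ_mem.2]⟩) ?_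
    rwa [sub_sub_cancel_left, sin_neg, abs_neg]
end

section
/- Let Δ, E ≥ 0, let C be a finite nonempty set of points of ℝ², let a ∈ ℝ² and let u ∈ ℝ² with ‖u‖ = 1; write π(p) := a + ⟨p − a, u⟩·u and δ_p := ‖p − π(p)‖, and assume δ_p ≤ Δ for every p ∈ C. For an ordered pair (p, p') ∈ C × C with ‖π(p) − π(p')‖ > E, define λ'_p := π(p) + √(Δ² − δ_p²)·(π(p') − π(p))/‖π(p') − π(p)‖, and symmetrically λ'_{p'} := π(p') + √(Δ² − δ_{p'}²)·(π(p) − π(p'))/‖π(p) − π(p')‖. Assume that ‖λ'_p − λ'_{p'}‖ ≤ E for every pair (p, p') ∈ C × C with ‖π(p) − π(p')‖ > E. Then there exist e₀, e₁ ∈ ℝ² with ‖e₀ − e₁‖ ≤ E such that for every p ∈ C there is t ∈ [0,1] with ‖e₀ + t·(e₁ − e₀) − p‖ ≤ Δ; i.e., there exists a covering segment for C of length at most E. -/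
open scoped RealInnerProductSpace

/-- **Lemma 4 (Appendix D).** Suppose a line through `a` with unit direction `u` covers the
finite nonempty set `C` within distance `Δ`. For each ordered pair `(p, p')` whose projections
`π p, π p'` are more than `E` apart, shrink the projection of `p` inward along the line by
`√(Δ² - δ_p²)`, obtaining `λ' p p'`. If all these modified pairs are within distance `E` of
each other, then there exists a covering segment for `C` of length at most `E`. -/
theorem covering_segment_of_shrunk_projections (Δ E : ℝ) (hΔ : 0 ≤ Δ) (hE : 0 ≤ E)
    (C : Set (EuclideanSpace ℝ (Fin 2))) (hfin : C.Finite) (hne : C.Nonempty)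
    (a u : EuclideanSpace ℝ (Fin 2)) (hu : ‖u‖ = 1)
    (π : EuclideanSpace ℝ (Fin 2) → EuclideanSpace ℝ (Fin 2))
    (hπ : ∀ p, π p = a + ⟪p - a, u⟫ • u)
    (hcov : ∀ p ∈ C, ‖p - π p‖ ≤ Δ)
    (lam : EuclideanSpace ℝ (Fin 2) → EuclideanSpace ℝ (Fin 2) → EuclideanSpace ℝ (Fin 2))
    (hlam : ∀ p p', lam p p' =
      π p + (Real.sqrt (Δ ^ 2 - ‖p - π p‖ ^ 2) * ‖π p' - π p‖⁻¹) • (π p' - π p))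
    (hfar : ∀ p ∈ C, ∀ p' ∈ C, ‖π p - π p'‖ > E → ‖lam p p' - lam p' p‖ ≤ E) :
    ∃ e₀ e₁ : EuclideanSpace ℝ (Fin 2), ‖e₀ - e₁‖ ≤ E ∧
      ∀ p ∈ C, ∃ t ∈ Set.Icc (0 : ℝ) 1, ‖e₀ + t • (e₁ - e₀) - p‖ ≤ Δ := by
  classical
  set f : EuclideanSpace ℝ (Fin 2) → ℝ := fun p => ⟪p - a, u⟫ with hf
  set w : EuclideanSpace ℝ (Fin 2) → ℝ := fun p => Real.sqrt (Δ ^ 2 - ‖p - π p‖ ^ 2) with hwdef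
  have huu : ⟪u, u⟫ = 1 := by
    rw [real_inner_self_eq_norm_sq, hu]; norm_num
  have hπf : ∀ p, π p = a + f p • u := fun p => hπ p
  have hw0 : ∀ q, 0 ≤ w q := fun q => Real.sqrt_nonneg _
  have hwsq : ∀ q ∈ C, w q ^ 2 = Δ ^ 2 - ‖q - π q‖ ^ 2 := by
    intro q hq
    exact Real.sq_sqrt (by nlinarith [hcov q hq, norm_nonneg (q - π q)])
  -- key: distance from a point on the line
  have key : ∀ q, ∀ s : ℝ, ‖a + s • u - q‖ ^ 2 = (s - f q) ^ 2 + ‖q - π q‖ ^ 2 := by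
    intro q s
    have hdec : a + s • u - q = (s - f q) • u - (q - π q) := by
      rw [hπf q]; module
    rw [hdec, norm_sub_sq_real]
    have hinner : ⟪(s - f q) • u, q - π q⟫ = 0 := by
      rw [inner_smul_left]
      have : ⟪u, q - π q⟫ = 0 := by
        rw [hπf q]
        simp only [inner_sub_right, inner_add_right, inner_smul_right, huu]
        have : ⟪u, q - a⟫ = f q := by
          rw [real_inner_comm]
        simp only [inner_sub_right] at this
        linarith [this]
      rw [this]; ring
    rw [hinner, norm_smul, hu]
    simp [mul_pow, abs_sq]
  -- covering criterion
  have crit : ∀ q ∈ C, ∀ s : ℝ, |s - f q| ≤ w q → ‖a + s • u - q‖ ≤ Δ := by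
    intro q hq s hs
    have h1 : ‖a + s • u - q‖ ^ 2 ≤ Δ ^ 2 := by
      rw [key q s]
      have : (s - f q) ^ 2 ≤ w q ^ 2 := by
        rw [← sq_abs]
        exact pow_le_pow_left₀ (abs_nonneg _) hs 2
      rw [hwsq q hq] at this
      linarith
    nlinarith [norm_nonneg (a + s • u - q)]
  -- extremizers
  obtain ⟨p, hp, hpmax⟩ := Set.exists_max_image C (fun q => f q - w q) hfin hne
  obtain ⟨p', hp', hpmin⟩ := Set.exists_min_image C (fun q => f q + w q) hfin hne
  set M : ℝ := f p - w p with hM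
  set m : ℝ := f p' + w p' with hm
  by_cases hMm : M ≤ m
  · -- single point suffices
    refine ⟨a + M • u, a + M • u, by simp [hE], ?_⟩
    intro q hq
    refine ⟨0, by constructor <;> norm_num, ?_⟩
    have h1 : f q - w q ≤ M := hpmax q hq
    have h2 : M ≤ f q + w q := le_trans hMm (hpmin q hq)
    have : |M - f q| ≤ w q := abs_le.2 ⟨by linarith, by linarith⟩
    have := crit q hq M this
    simpa using this
  · push_neg at hMm
    -- M > m; show M - m ≤ E
    have hfp : f p' ≤ m := by have := hw0 p'; linarith
    have hfp2 : M ≤ f p := by have := hw0 p; linarith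
    have hsep : M - m ≤ E := by
      by_cases hle : f p - f p' ≤ E
      · have := hw0 p; have := hw0 p'; linarith
      · push_neg at hle
        have hd : f p - f p' > E := hle
        have hdpos : 0 < f p - f p' := lt_of_le_of_lt hE hd
        have hππ : π p - π p' = (f p - f p') • u := by
          rw [hπf p, hπf p']; module
        have hnorm : ‖π p - π p'‖ = f p - f p' := by
          rw [hππ, norm_smul, hu, mul_one, Real.norm_eq_abs, abs_of_pos hdpos]
        have hfar' := hfar p hp p' hp' (by rw [hnorm]; exact hd)
        have hππ' : π p' - π p = (f p' - f p) • u := by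
          rw [hπf p, hπf p']; module
        have hnorm' : ‖π p' - π p‖ = f p - f p' := by
          rw [hππ', norm_smul, hu, mul_one, Real.norm_eq_abs, abs_of_neg (by linarith)]
          ring
        have hlam1 : lam p p' = a + M • u := by
          rw [hlam p p']
          show π p + (w p * ‖π p' - π p‖⁻¹) • (π p' - π p) = a + M • u
          rw [hnorm', hππ', smul_smul]
          have hc : w p * (f p - f p')⁻¹ * (f p' - f p) = -w p := by
            field_simp
            ring
          rw [hc, hπf p, hM]
          module
        have hlam2 : lam p' p = a + m • u := by
          rw [hlam p' p]
          show π p' + (w p' * ‖π p - π p'‖⁻¹) • (π p - π p') = a + m • u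
          rw [hnorm, hππ, smul_smul]
          have hc : w p' * (f p - f p')⁻¹ * (f p - f p') = w p' := by
            field_simp
          rw [hc, hπf p', hm]
          module
        have hdiff : lam p p' - lam p' p = (M - m) • u := by
          rw [hlam1, hlam2]; module
        rw [hdiff, norm_smul, hu, mul_one, Real.norm_eq_abs, abs_of_pos (by linarith)] at hfar'
        exact hfar'
    refine ⟨a + m • u, a + M • u, ?_, ?_⟩
    · have : a + m • u - (a + M • u) = (m - M) • u := by module
      rw [this, norm_smul, hu, mul_one, Real.norm_eq_abs, abs_of_neg (by linarith)]
      linarith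
    · intro q hq
      set s : ℝ := max m (f q - w q) with hs
      have hs1 : m ≤ s := le_max_left _ _
      have hs2 : f q - w q ≤ s := le_max_right _ _
      have hs3 : s ≤ M := max_le (le_of_lt hMm) (hpmax q hq)
      have hs4 : s ≤ f q + w q := max_le (hpmin q hq) (by have := hw0 q; linarith)
      refine ⟨(s - m) / (M - m), ⟨div_nonneg (by linarith) (by linarith), ?_⟩, ?_⟩
      · rw [div_le_one (by linarith)]; linarith
      · have heq : a + m • u + ((s - m) / (M - m)) • (a + M • u - (a + m • u)) = a + s • u := by
          have h1 : a + M • u - (a + m • u) = (M - m) • u := by module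
          rw [h1, smul_smul, div_mul_cancel₀ _ (by linarith : M - m ≠ 0)]
          module
        rw [heq]
        exact crit q hq s (abs_le.2 ⟨by linarith, by linarith⟩)
end

section
/- There do not exist e₀, e₁ ∈ ℝ² with ‖e₀ − e₁‖ ≤ 2 such that the segment with endpoints e₀ and e₁ covers each of the three points (0,0), (4,0) and (2, 1.1) within distance 1; i.e., there are no e₀, e₁ with ‖e₀ − e₁‖ ≤ 2 and t₁, t₂, t₃ ∈ [0,1] satisfying ‖e₀ + t₁·(e₁ − e₀) − (0,0)‖ ≤ 1, ‖e₀ + t₂·(e₁ − e₀) − (4,0)‖ ≤ 1 and ‖e₀ + t₃·(e₁ − e₀) − (2, 1.1)‖ ≤ 1. -/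
/-!
The points `p`, `q` of the segment that cover `a = (0,0)` and `b = (4,0)` are at distance at most
`2` from each other, so the triangle inequality `dist a b ≤ dist a p + dist p q + dist q b` is an
equality. By strict convexity of the Euclidean norm, `p` and `q` then lie on the segment `[a, b]`,
and they are distinct, so the whole tornado path lies on the line `y = 0`, which stays at
distance `1.1` from `(2, 1.1)`.
-/

open AffineMap

section StrictConvex

variable {V P : Type*} [NormedAddCommGroup V] [NormedSpace ℝ V] [StrictConvexSpace ℝ V]
  [MetricSpace P] [NormedAddTorsor V P]

theorem wbtw_of_dist_le_of_dist_le {a b p q : P} {r : ℝ} (hap : dist a p ≤ r)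
    (hpq : dist p q + 2 * r ≤ dist a b) (hqb : dist q b ≤ r) :
    Wbtw ℝ a p b ∧ Wbtw ℝ a q b := by
  constructor
  · refine dist_add_dist_eq_iff.mp (le_antisymm ?_ (dist_triangle a p b))
    linarith [dist_triangle p q b]
  · refine dist_add_dist_eq_iff.mp (le_antisymm ?_ (dist_triangle a q b))
    linarith [dist_triangle a p q]

end StrictConvex

theorem EuclideanSpace.apply_eq_of_mem_affineSpan_pair {ι : Type*} [Fintype ι]
    {a b z : EuclideanSpace ℝ ι} {i : ι} (hz : z ∈ line[ℝ, a, b]) (hab : a i = b i) :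
    z i = a i := by
  obtain ⟨r, rfl⟩ := mem_affineSpan_pair_iff_exists_lineMap_eq.mp hz
  simp [lineMap_apply_module', hab]

theorem EuclideanSpace.dist_apply_le_dist_of_mem_affineSpan_pair {ι : Type*} [Fintype ι]
    {a b z : EuclideanSpace ℝ ι} (c : EuclideanSpace ℝ ι) {i : ι} (hz : z ∈ line[ℝ, a, b])
    (hab : a i = b i) : dist (a i) (c i) ≤ dist z c := by
  rw [← apply_eq_of_mem_affineSpan_pair hz hab]
  exact PiLp.dist_apply_le z c i

/-- **Remark 3.** No line segment of length at most `2` covers each of the points `(0,0)`,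
`(4,0)` and `(2, 1.1)` within distance `1`. -/
theorem no_segment_covers_triple :
    ¬ ∃ e₀ e₁ : EuclideanSpace ℝ (Fin 2), ‖e₀ - e₁‖ ≤ 2 ∧
        (∃ t₁ ∈ Set.Icc (0 : ℝ) 1,
          ‖e₀ + t₁ • (e₁ - e₀) - (EuclideanSpace.equiv (Fin 2) ℝ).symm ![0, 0]‖ ≤ 1) ∧
        (∃ t₂ ∈ Set.Icc (0 : ℝ) 1,
          ‖e₀ + t₂ • (e₁ - e₀) - (EuclideanSpace.equiv (Fin 2) ℝ).symm ![4, 0]‖ ≤ 1) ∧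
        (∃ t₃ ∈ Set.Icc (0 : ℝ) 1,
          ‖e₀ + t₃ • (e₁ - e₀) - (EuclideanSpace.equiv (Fin 2) ℝ).symm ![2, 1.1]‖ ≤ 1) := by
  rintro ⟨e₀, e₁, hlen, ⟨t₁, ht₁, h₁⟩, ⟨t₂, ht₂, h₂⟩, ⟨t₃, -, h₃⟩⟩
  set a : EuclideanSpace ℝ (Fin 2) := (EuclideanSpace.equiv (Fin 2) ℝ).symm ![0, 0]
  set b : EuclideanSpace ℝ (Fin 2) := (EuclideanSpace.equiv (Fin 2) ℝ).symm ![4, 0]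
  set c : EuclideanSpace ℝ (Fin 2) := (EuclideanSpace.equiv (Fin 2) ℝ).symm ![2, 1.1]
  have hpath (t : ℝ) : e₀ + t • (e₁ - e₀) = lineMap e₀ e₁ t := by
    rw [lineMap_apply_module', add_comm]
  rw [hpath, ← dist_eq_norm, dist_comm] at h₁
  rw [hpath, ← dist_eq_norm] at h₂ h₃
  rw [← dist_eq_norm] at hlen
  set p := lineMap e₀ e₁ t₁
  set q := lineMap e₀ e₁ t₂
  have hab : dist a b = 4 := by simp [a, b, EuclideanSpace.dist_eq, Real.dist_eq]
  have hpq : dist p q ≤ 2 := by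
    rw [dist_lineMap_lineMap]
    nlinarith [Real.dist_le_of_mem_Icc_01 ht₁ ht₂, dist_nonneg (x := e₀) (y := e₁)]
  obtain ⟨hp, hq⟩ := wbtw_of_dist_le_of_dist_le h₁ (by linarith) h₂
  have hne : p ≠ q := by
    intro hpq_eq
    have htri := dist_triangle4 a p q b
    rw [hpq_eq] at htri h₁
    linarith [dist_self q]
  have hline : line[ℝ, e₀, e₁] = line[ℝ, a, b] := by
    rw [← affineSpan_pair_eq_of_mem_of_mem_of_ne (lineMap_mem_affineSpan_pair t₁ e₀ e₁)
      (lineMap_mem_affineSpan_pair t₂ e₀ e₁) hne,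
      affineSpan_pair_eq_of_mem_of_mem_of_ne hp.mem_affineSpan hq.mem_affineSpan hne]
  have hfar := EuclideanSpace.dist_apply_le_dist_of_mem_affineSpan_pair c (i := 1)
    (hline ▸ lineMap_mem_affineSpan_pair t₃ e₀ e₁) (by simp [a, b])
  have hgap : dist (a 1) (c 1) = 1.1 := by norm_num [a, c, Real.dist_eq]
  linarith
end

section
/- Let e₀, e₁ ∈ ℝ² with ‖e₀ − e₁‖ ≤ 2, and suppose there exist t₁, t₂ ∈ [0,1] with ‖e₀ + t₁·(e₁ − e₀) − (0,0)‖ ≤ 1 and ‖e₀ + t₂·(e₁ − e₀) − (4,0)‖ ≤ 1. Then {e₀, e₁} = {(1,0), (3,0)}; i.e., either e₀ = (1,0) and e₁ = (3,0), or e₀ = (3,0) and e₁ = (1,0). In particular, the only segment of length at most 2 covering both (0,0) and (4,0) within distance 1 is the segment from (1,0) to (3,0). -/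
lemma coords_of_norm_eq (x : EuclideanSpace ℝ (Fin 2)) (r : ℝ) (h : ‖x‖ = r) :
    (x 0)^2 + (x 1)^2 = r^2 := by
  have h2 : ‖x‖^2 = ∑ i, ‖x i‖^2 := by
    rw [EuclideanSpace.norm_eq]; exact Real.sq_sqrt (by positivity)
  rw [h] at h2
  simpa [Fin.sum_univ_two, sq_abs] using h2.symm

lemma unique_covering_core (x1 y1 x2 y2 : ℝ) (h1 : x1^2 + y1^2 = 1)
    (h2 : (x2-4)^2 + y2^2 = 1) (h3 : (x2-x1)^2 + (y2-y1)^2 = 4) :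
    x1 = 1 ∧ y1 = 0 ∧ x2 = 3 ∧ y2 = 0 := by
  have key : (x1-1)^2 + y1^2 + (x2-3)^2 + y2^2 ≤ 0 := by
    nlinarith [sq_nonneg (x1*(y2-y1) - y1*(x2-x1)), sq_nonneg ((x2-4)*(y2-y1) - y2*(x2-x1)),
      sq_nonneg (y2-y1), sq_nonneg (x2-x1-2), sq_nonneg (x1+x2-4), sq_nonneg (y1+y2),
      sq_nonneg (y1-y2)]
  refine ⟨?_, ?_, ?_, ?_⟩ <;>
    nlinarith [sq_nonneg (x1-1), sq_nonneg y1, sq_nonneg (x2-3), sq_nonneg y2]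

/-- **Uniqueness claim in Remark 3.** The only segment of length at most `2` covering both
`(0,0)` and `(4,0)` within distance `1` is the segment with endpoints `(1,0)` and `(3,0)`. -/
theorem unique_covering_segment (e₀ e₁ : EuclideanSpace ℝ (Fin 2))
    (hlen : ‖e₀ - e₁‖ ≤ 2)
    (h₁ : ∃ t₁ ∈ Set.Icc (0 : ℝ) 1,
      ‖e₀ + t₁ • (e₁ - e₀) - (EuclideanSpace.equiv (Fin 2) ℝ).symm ![0, 0]‖ ≤ 1)
    (h₂ : ∃ t₂ ∈ Set.Icc (0 : ℝ) 1,
      ‖e₀ + t₂ • (e₁ - e₀) - (EuclideanSpace.equiv (Fin 2) ℝ).symm ![4, 0]‖ ≤ 1) :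
    (e₀ = (EuclideanSpace.equiv (Fin 2) ℝ).symm ![1, 0] ∧
        e₁ = (EuclideanSpace.equiv (Fin 2) ℝ).symm ![3, 0]) ∨
      (e₀ = (EuclideanSpace.equiv (Fin 2) ℝ).symm ![3, 0] ∧
        e₁ = (EuclideanSpace.equiv (Fin 2) ℝ).symm ![1, 0]) := by
  obtain ⟨t₁, ⟨ht₁0, ht₁1⟩, hp⟩ := h₁
  obtain ⟨t₂, ⟨ht₂0, ht₂1⟩, hq⟩ := h₂
  set b : EuclideanSpace ℝ (Fin 2) := (EuclideanSpace.equiv (Fin 2) ℝ).symm ![4, 0] with hb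
  set p : EuclideanSpace ℝ (Fin 2) := e₀ + t₁ • (e₁ - e₀) with hpdef
  set q : EuclideanSpace ℝ (Fin 2) := e₀ + t₂ • (e₁ - e₀) with hqdef
  have hz : ((EuclideanSpace.equiv (Fin 2) ℝ).symm ![(0:ℝ), 0] : EuclideanSpace ℝ (Fin 2)) = 0 := by
    ext i; fin_cases i <;> rfl
  rw [hz, sub_zero] at hp
  -- length of e₁ - e₀
  have hd : ‖e₁ - e₀‖ ≤ 2 := by rwa [norm_sub_rev] at hlen
  -- the covering points are |t₂ - t₁|·‖e₁-e₀‖ apart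
  have hqp : q - p = (t₂ - t₁) • (e₁ - e₀) := by
    rw [hpdef, hqdef]; module
  have habs : |t₂ - t₁| ≤ 1 := by rw [abs_le]; constructor <;> linarith
  have hnqp : ‖q - p‖ = |t₂ - t₁| * ‖e₁ - e₀‖ := by
    rw [hqp, norm_smul, Real.norm_eq_abs]
  have hqp2 : ‖q - p‖ ≤ 2 := by
    rw [hnqp]
    calc |t₂ - t₁| * ‖e₁ - e₀‖ ≤ 1 * 2 := by
          apply mul_le_mul habs hd (norm_nonneg _) zero_le_one
      _ = 2 := by ring
  -- ‖b‖ = 4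
  have hnb : ‖b‖ = 4 := by
    have : (b 0)^2 + (b 1)^2 = 16 := by norm_num [show b 0 = 4 from rfl, show b 1 = 0 from rfl]
    have h4 : ‖b‖^2 = 16 := by
      have h2 : ‖b‖^2 = ∑ i, ‖b i‖^2 := by
        rw [EuclideanSpace.norm_eq]; exact Real.sq_sqrt (by positivity)
      rw [h2, Fin.sum_univ_two, Real.norm_eq_abs, Real.norm_eq_abs, sq_abs, sq_abs, this]
    nlinarith [norm_nonneg b]
  -- triangle inequality chain
  have htri : 4 ≤ ‖p‖ + ‖q - p‖ + ‖q - b‖ := by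
    have : b = p + (q - p) + (b - q) := by module
    calc (4:ℝ) = ‖b‖ := hnb.symm
      _ = ‖p + (q - p) + (b - q)‖ := by rw [← this]
      _ ≤ ‖p + (q - p)‖ + ‖b - q‖ := norm_add_le _ _
      _ ≤ ‖p‖ + ‖q - p‖ + ‖b - q‖ := by linarith [norm_add_le p (q - p)]
      _ = ‖p‖ + ‖q - p‖ + ‖q - b‖ := by rw [norm_sub_rev b q]
  -- all equalities
  have hP : ‖p‖ = 1 := le_antisymm hp (by linarith)
  have hQ : ‖q - b‖ = 1 := le_antisymm hq (by linarith)
  have hPQ : ‖q - p‖ = 2 := le_antisymm hqp2 (by linarith)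
  -- |t₂ - t₁| = 1
  have habs1 : |t₂ - t₁| = 1 := by
    by_contra h
    have hlt : |t₂ - t₁| < 1 := lt_of_le_of_ne habs h
    have : ‖q - p‖ < 2 := by
      rw [hnqp]
      calc |t₂ - t₁| * ‖e₁ - e₀‖ ≤ |t₂ - t₁| * 2 := by
            apply mul_le_mul_of_nonneg_left hd (abs_nonneg _)
        _ < 1 * 2 := by linarith
        _ = 2 := by ring
    linarith
  -- coordinates
  have hpc : (p 0)^2 + (p 1)^2 = 1 := by simpa using coords_of_norm_eq p 1 hP
  have hqc : (q 0 - 4)^2 + (q 1)^2 = 1 := by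
    have := coords_of_norm_eq (q - b) 1 hQ
    have e0 : (q - b) 0 = q 0 - 4 := rfl
    have e1 : (q - b) 1 = q 1 - 0 := rfl
    rw [e0, e1] at this; simpa using this
  have hpqc : (q 0 - p 0)^2 + (q 1 - p 1)^2 = 4 := by
    have := coords_of_norm_eq (q - p) 2 hPQ
    have e0 : (q - p) 0 = q 0 - p 0 := rfl
    have e1 : (q - p) 1 = q 1 - p 1 := rfl
    rw [e0, e1] at this; linarith
  obtain ⟨hx1, hy1, hx2, hy2⟩ := unique_covering_core (p 0) (p 1) (q 0) (q 1) hpc hqc hpqc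
  -- p = (1,0), q = (3,0)
  have hpval : p = (EuclideanSpace.equiv (Fin 2) ℝ).symm ![1, 0] := by
    ext i; fin_cases i
    · simpa using hx1
    · simpa using hy1
  have hqval : q = (EuclideanSpace.equiv (Fin 2) ℝ).symm ![3, 0] := by
    ext i; fin_cases i
    · simpa using hx2
    · simpa using hy2
  -- t values
  rcases abs_eq (by norm_num : (0:ℝ) ≤ 1) |>.mp habs1 with h | h
  · -- t₂ - t₁ = 1 : t₁ = 0, t₂ = 1
    have ht1 : t₁ = 0 := by linarith
    have ht2 : t₂ = 1 := by linarith
    left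
    have he0 : e₀ = p := by rw [hpdef, ht1]; module
    have he1 : e₁ = q := by rw [hqdef, ht2]; module
    exact ⟨he0.trans hpval, he1.trans hqval⟩
  · -- t₂ - t₁ = -1 : t₁ = 1, t₂ = 0
    have ht1 : t₁ = 1 := by linarith
    have ht2 : t₂ = 0 := by linarith
    right
    have he0 : e₀ = q := by rw [hqdef, ht2]; module
    have he1 : e₁ = p := by rw [hpdef, ht1]; module
    exact ⟨he0.trans hqval, he1.trans hpval⟩
end
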